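/- arXiv:1111.2401 — 2 statements merged into one kernel-verified Lean document; each statement's English description precedes it below -/
import Mathlib

section
/- Let G be a linearly ordered group and let 𝔠_mg be the relation on S_G defined by x 𝔠_mg y iff there exists an idempotent z of S_G with x·z = y·z. Then: (1) (a,b) 𝔠_mg (c,d) holds if and only if b⁻¹·a = d⁻¹·c; (2) the map f : S_G → G, (a,b) ↦ b⁻¹·a, is a surjective antihomomorphism, i.e. f(x·y) = f(y)·f(x); consequently 𝔠_mg is a group congruence on S_G (the least group congruence) and the quotient S_G/𝔠_mg is antiisomorphic to the group G. The same statements hold for S_G⁺. -/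
variable {G : Type*} [Group G] [LinearOrder G]
  [CovariantClass G G (· * ·) (· ≤ ·)] [CovariantClass G G (Function.swap (· * ·)) (· ≤ ·)]

/-- The multiplication of the semigroup `S_G` on `G × G`:
`(a,b)·(c,d) = (c·b⁻¹·a, d)` if `b < c`; `(a,d)` if `b = c`; `(a, b·c⁻¹·d)` if `b > c`. -/
def Smul (x y : G × G) : G × G :=
  if x.2 < y.1 then (y.1 * x.2⁻¹ * x.1, y.2)
  else if x.2 = y.1 then (x.1, y.2)
  else (x.1, x.2 * y.1⁻¹ * y.2)

/-- The carrier of the semigroup `S_G⁺` on the positive cone `G⁺ = {x | 1 ≤ x}`. -/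
abbrev PosS (G : Type*) [Group G] [LinearOrder G] : Type _ :=
  {p : G × G // 1 ≤ p.1 ∧ 1 ≤ p.2}

theorem smul_mem {x y : G × G} (hx : 1 ≤ x.1 ∧ 1 ≤ x.2) (hy : 1 ≤ y.1 ∧ 1 ≤ y.2) :
    1 ≤ (Smul x y).1 ∧ 1 ≤ (Smul x y).2 := by
  unfold Smul
  split_ifs with h1 h2
  · refine ⟨?_, hy.2⟩
    have h3 : (1 : G) ≤ y.1 * x.2⁻¹ := by
      have h4 : x.2 * x.2⁻¹ ≤ y.1 * x.2⁻¹ := by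
        have := h1.le
        gcongr
      rwa [mul_inv_cancel] at h4
    exact one_le_mul h3 hx.1
  · exact ⟨hx.1, hy.2⟩
  · refine ⟨hx.1, ?_⟩
    have h3 : (1 : G) ≤ x.2 * y.1⁻¹ := by
      have h4 : y.1 * y.1⁻¹ ≤ x.2 * y.1⁻¹ := by
        have := not_lt.mp h1
        gcongr
      rwa [mul_inv_cancel] at h4
    exact one_le_mul h3 hy.2

/-- The multiplication of the semigroup `S_G⁺`. -/
def SmulP (x y : PosS G) : PosS G := ⟨Smul x.1 y.1, smul_mem x.2 y.2⟩

/-- `c` is a congruence on the semigroup `(S, m)` : an equivalence relation compatible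
with multiplication on both sides. -/
def IsSgCongruence {S : Type*} (m : S → S → S) (c : S → S → Prop) : Prop :=
  Equivalence c ∧ ∀ x y s : S, c x y → c (m s x) (m s y) ∧ c (m x s) (m y s)

/-- `c` differs from both the identity relation and the universal relation. -/
def IsNontrivialRel {S : Type*} (c : S → S → Prop) : Prop :=
  (∃ x y : S, c x y ∧ x ≠ y) ∧ ∃ x y : S, ¬c x y

/-- The quotient of the semigroup `(S, m)` by the congruence `c` is a group:
there is a class acting as a two-sided identity and every class has a two-sided inverse. -/
def IsGroupCongruence {S : Type*} (m : S → S → S) (c : S → S → Prop) : Prop :=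
  ∃ e : S, (∀ x : S, c (m e x) x ∧ c (m x e) x) ∧ ∀ x : S, ∃ y : S, c (m x y) e ∧ c (m y x) e

/-- The least group congruence `𝔠_mg` on `S_G`: `x 𝔠_mg y` iff `x·z = y·z` for some
idempotent `z`. -/
def cmgS (x y : G × G) : Prop := ∃ z : G × G, Smul z z = z ∧ Smul x z = Smul y z

/-- The least group congruence `𝔠_mg` on `S_G⁺`. -/
def cmgSP (x y : PosS G) : Prop := ∃ z : PosS G, SmulP z z = z ∧ SmulP x z = SmulP y z


/-! The map `f (a, b) = b⁻¹ * a` turns products of `S_G` into products of `G` in reverse order,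
and two elements with the same image are equalised by the idempotent `(t, t)` for any `t`
dominating both second coordinates. Hence `𝔠_mg` is the kernel of the surjective
antihomomorphism `f` onto a group, which makes it a group congruence; it is the least one
because in any group quotient the factor `z` of `x * z = y * z` can be cancelled. -/

section GroupCongruence

variable {S H : Type*}

def cmg (m : S → S → S) (x y : S) : Prop := ∃ z, m z z = z ∧ m x z = m y z

variable {m : S → S → S} {f : S → H}

theorem isSgCongruence_ker [Mul H] (hf : ∀ x y, f (m x y) = f y * f x) :
    IsSgCongruence m fun x y => f x = f y :=
  ⟨⟨fun _ => rfl, Eq.symm, Eq.trans⟩, fun _ _ _ h => ⟨by simp only [hf, h], by simp only [hf, h]⟩⟩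

theorem isGroupCongruence_ker [Group H] (hf : ∀ x y, f (m x y) = f y * f x)
    (hsurj : Function.Surjective f) : IsGroupCongruence m fun x y => f x = f y := by
  obtain ⟨e, he⟩ := hsurj 1
  refine ⟨e, fun x => by simp [hf, he], fun x => ?_⟩
  obtain ⟨y, hy⟩ := hsurj (f x)⁻¹
  exact ⟨y, by simp [hf, he, hy], by simp [hf, he, hy]⟩

theorem cmg_eq_ker [Group H] (hf : ∀ x y, f (m x y) = f y * f x)
    (hcmg : ∀ x y, f x = f y → cmg m x y) : cmg m = fun x y => f x = f y := by
  ext x y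
  refine ⟨fun ⟨z, _, hz⟩ => mul_left_cancel (a := f z) ?_, hcmg x y⟩
  rw [← hf, ← hf, hz]

theorem rel_of_cmg {c : S → S → Prop} (hassoc : ∀ x y z, m (m x y) z = m x (m y z))
    (hc : IsSgCongruence m c) (hg : IsGroupCongruence m c) {x y : S} (hxy : cmg m x y) :
    c x y := by
  obtain ⟨⟨_, hsymm, htrans⟩, hcompat⟩ := hc
  obtain ⟨e, he, hinv⟩ := hg
  obtain ⟨z, -, hz⟩ := hxy
  obtain ⟨w, hzw, -⟩ := hinv z
  have hx : c (m (m x z) w) (m x e) := by simpa only [hassoc] using (hcompat _ _ x hzw).1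
  have hy : c (m (m y z) w) (m y e) := by simpa only [hassoc] using (hcompat _ _ y hzw).1
  rw [hz] at hx
  exact htrans (hsymm (he x).2) (htrans (htrans (hsymm hx) hy) (he y).2)

end GroupCongruence

section SG

variable {G : Type*} [Group G]

theorem Smul_inv_mul_surjective : Function.Surjective fun x : G × G => x.2⁻¹ * x.1 :=
  fun g => ⟨(g, 1), by simp⟩

variable [LinearOrder G]

theorem Smul_eq_max (x y : G × G) :
    Smul x y = (max x.2 y.1 * x.2⁻¹ * x.1, max x.2 y.1 * y.1⁻¹ * y.2) := by
  unfold Smul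
  rcases lt_trichotomy x.2 y.1 with h | h | h
  · rw [if_pos h, max_eq_right h.le, mul_inv_cancel, one_mul]
  · rw [if_neg h.not_lt, if_pos h, h, max_self, mul_inv_cancel, one_mul, one_mul]
  · rw [if_neg (lt_asymm h), if_neg h.ne', max_eq_left h.le, mul_inv_cancel, one_mul]

theorem Smul_inv_mul (x y : G × G) :
    (Smul x y).2⁻¹ * (Smul x y).1 = (y.2⁻¹ * y.1) * (x.2⁻¹ * x.1) := by
  simp [Smul_eq_max, mul_assoc]

theorem Smul_assoc [MulRightMono G] (x y z : G × G) :
    Smul (Smul x y) z = Smul x (Smul y z) := by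
  obtain ⟨a, b⟩ := x; obtain ⟨c, d⟩ := y; obtain ⟨p, q⟩ := z
  -- both sides equal `max (b * c⁻¹ * d) (max d p)`
  have hmax : max (max b c * c⁻¹ * d) p = max b (max d p * d⁻¹ * c) * c⁻¹ * d := by
    rw [mul_assoc (max b c), ← max_mul_mul_right, mul_assoc (max d p), ← max_mul_mul_right,
      mul_inv_cancel_left, ← max_mul_mul_right]
    simp [mul_assoc, max_assoc]
  simp only [Smul_eq_max, hmax, Prod.mk.injEq]
  constructor <;> group

theorem Smul_diag_idem (t : G) : Smul (t, t) (t, t) = (t, t) := by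
  simp [Smul_eq_max]

theorem Smul_diag_eq_of_inv_mul_eq {x y : G × G} {t : G} (hx : x.2 ≤ t) (hy : y.2 ≤ t)
    (h : x.2⁻¹ * x.1 = y.2⁻¹ * y.1) : Smul x (t, t) = Smul y (t, t) := by
  simp [Smul_eq_max, max_eq_right hx, max_eq_right hy, mul_assoc, h]

theorem cmg_Smul_of_inv_mul_eq {x y : G × G} (h : x.2⁻¹ * x.1 = y.2⁻¹ * y.1) :
    cmg Smul x y :=
  ⟨_, Smul_diag_idem _, Smul_diag_eq_of_inv_mul_eq (le_max_left x.2 y.2) (le_max_right _ _) h⟩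

end SG

section SGPos

variable {G : Type*} [Group G] [LinearOrder G] [MulLeftMono G]

theorem SmulP_inv_mul_surjective : Function.Surjective fun x : PosS G => x.1.2⁻¹ * x.1.1 := by
  intro g
  rcases le_total 1 g with h | h
  · exact ⟨⟨(g, 1), h, le_rfl⟩, by simp⟩
  · exact ⟨⟨(1, g⁻¹), le_rfl, one_le_inv'.mpr h⟩, by simp⟩

variable [MulRightMono G]

theorem SmulP_assoc (x y z : PosS G) : SmulP (SmulP x y) z = SmulP x (SmulP y z) :=
  Subtype.ext (Smul_assoc x.1 y.1 z.1)

theorem SmulP_inv_mul (x y : PosS G) :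
    (SmulP x y).1.2⁻¹ * (SmulP x y).1.1 = (y.1.2⁻¹ * y.1.1) * (x.1.2⁻¹ * x.1.1) :=
  Smul_inv_mul x.1 y.1

theorem cmg_SmulP_of_inv_mul_eq {x y : PosS G} (h : x.1.2⁻¹ * x.1.1 = y.1.2⁻¹ * y.1.1) :
    cmg SmulP x y := by
  have ht : (1 : G) ≤ max x.1.2 y.1.2 := x.2.2.trans (le_max_left _ _)
  exact ⟨⟨_, ht, ht⟩, Subtype.ext (Smul_diag_idem _),
    Subtype.ext (Smul_diag_eq_of_inv_mul_eq (le_max_left _ _) (le_max_right _ _) h)⟩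

end SGPos

/-- For a linearly ordered group `G`: `(a,b) 𝔠_mg (c,d)` iff `b⁻¹·a = d⁻¹·c`; the map
`f : (a,b) ↦ b⁻¹·a` is a surjective antihomomorphism of `S_G` onto `G`; consequently
`𝔠_mg` is a group congruence on `S_G` — indeed the least one — and, since the fibres of
`f` are exactly the `𝔠_mg`-classes, the quotient `S_G/𝔠_mg` is antiisomorphic to `G`.
The same statements hold for `S_G⁺`. -/
theorem stmt17 {G : Type*} [Group G] [LinearOrder G]
    [CovariantClass G G (· * ·) (· ≤ ·)]
    [CovariantClass G G (Function.swap (· * ·)) (· ≤ ·)] :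
    ((∀ a b c d : G, cmgS (a, b) (c, d) ↔ b⁻¹ * a = d⁻¹ * c) ∧
      (Function.Surjective (fun x : G × G => x.2⁻¹ * x.1) ∧
        ∀ x y : G × G, (Smul x y).2⁻¹ * (Smul x y).1 = (y.2⁻¹ * y.1) * (x.2⁻¹ * x.1)) ∧
      IsSgCongruence (Smul (G := G)) cmgS ∧
      IsGroupCongruence (Smul (G := G)) cmgS ∧
      (∀ c : (G × G) → (G × G) → Prop,
        IsSgCongruence (Smul (G := G)) c → IsGroupCongruence (Smul (G := G)) c →
          ∀ x y : G × G, cmgS x y → c x y) ∧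
      (∀ x y : G × G, x.2⁻¹ * x.1 = y.2⁻¹ * y.1 ↔ cmgS x y)) ∧
    ((∀ x y : PosS G, cmgSP x y ↔ x.1.2⁻¹ * x.1.1 = y.1.2⁻¹ * y.1.1) ∧
      (Function.Surjective (fun x : PosS G => x.1.2⁻¹ * x.1.1) ∧
        ∀ x y : PosS G,
          (SmulP x y).1.2⁻¹ * (SmulP x y).1.1 = (y.1.2⁻¹ * y.1.1) * (x.1.2⁻¹ * x.1.1)) ∧
      IsSgCongruence (SmulP (G := G)) cmgSP ∧
      IsGroupCongruence (SmulP (G := G)) cmgSP ∧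
      (∀ c : PosS G → PosS G → Prop,
        IsSgCongruence (SmulP (G := G)) c → IsGroupCongruence (SmulP (G := G)) c →
          ∀ x y : PosS G, cmgSP x y → c x y) ∧
      (∀ x y : PosS G, x.1.2⁻¹ * x.1.1 = y.1.2⁻¹ * y.1.1 ↔ cmgSP x y)) := by
  have hS : (cmgS : G × G → G × G → Prop) = fun x y => x.2⁻¹ * x.1 = y.2⁻¹ * y.1 :=
    cmg_eq_ker Smul_inv_mul fun _ _ => cmg_Smul_of_inv_mul_eq
  have hP : (cmgSP : PosS G → PosS G → Prop) = fun x y => x.1.2⁻¹ * x.1.1 = y.1.2⁻¹ * y.1.1 :=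
    cmg_eq_ker SmulP_inv_mul fun _ _ => cmg_SmulP_of_inv_mul_eq
  refine ⟨⟨fun a b c d => by rw [hS], ⟨Smul_inv_mul_surjective, Smul_inv_mul⟩,
      hS ▸ isSgCongruence_ker Smul_inv_mul,
      hS ▸ isGroupCongruence_ker Smul_inv_mul Smul_inv_mul_surjective,
      fun c hc hg _ _ => rel_of_cmg Smul_assoc hc hg, fun x y => by rw [hS]⟩,
    ⟨fun x y => by rw [hP], ⟨SmulP_inv_mul_surjective, SmulP_inv_mul⟩,
      hP ▸ isSgCongruence_ker SmulP_inv_mul,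
      hP ▸ isGroupCongruence_ker SmulP_inv_mul SmulP_inv_mul_surjective,
      fun c hc hg _ _ => rel_of_cmg SmulP_assoc hc hg, fun x y => by rw [hP]⟩⟩
end

section
/- Let G be a linearly ordered d-group and let 𝔠_mg be the least group congruence on T_G (given by x 𝔠_mg y iff x·z = y·z for some idempotent z of T_G). Then (a,b,s) 𝔠_mg (c,d,t) holds if and only if b⁻¹·a = d⁻¹·c; the map (a,b,s) ↦ b⁻¹·a is a surjective antihomomorphism from T_G onto G, so the quotient T_G/𝔠_mg is antiisomorphic to G; and if in addition G is archimedean then T_G/𝔠_mg is isomorphic to G. The same statements hold for T_G⁺. -/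
variable {G : Type*} [Group G] [LinearOrder G]
  [CovariantClass G G (· * ·) (· ≤ ·)] [CovariantClass G G (Function.swap (· * ·)) (· ≤ ·)]

/-- The multiplication of the semigroup `T_G` on `G × G × {0,1}` (with `{0,1}` modelled
by `Bool`, `0 = false < 1 = true`): `(g,h,s)·(k,l,t) = ((h∨k)·h⁻¹·g, (h∨k)·k⁻¹·l, r)`
where `r = t` if `h < k`, `r = s` if `h > k`, and `r = min s t` if `h = k`. -/
def Tmul (x y : G × G × Bool) : G × G × Bool :=
  (max x.2.1 y.1 * x.2.1⁻¹ * x.1,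
   max x.2.1 y.1 * y.1⁻¹ * y.2.1,
   if x.2.1 < y.1 then y.2.2 else if y.1 < x.2.1 then x.2.2 else min x.2.2 y.2.2)

/-- The carrier of the semigroup `T_G⁺` on the positive cone. -/
abbrev PosT (G : Type*) [Group G] [LinearOrder G] : Type _ :=
  {x : G × G × Bool // 1 ≤ x.1 ∧ 1 ≤ x.2.1}

theorem tmul_mem {x y : G × G × Bool} (hx : 1 ≤ x.1 ∧ 1 ≤ x.2.1) (hy : 1 ≤ y.1 ∧ 1 ≤ y.2.1) :
    1 ≤ (Tmul x y).1 ∧ 1 ≤ (Tmul x y).2.1 := by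
  unfold Tmul
  refine ⟨one_le_mul ?_ hx.1, one_le_mul ?_ hy.2⟩
  · have h4 := mul_le_mul' (le_max_left x.2.1 y.1) (le_refl x.2.1⁻¹)
    rwa [mul_inv_cancel] at h4
  · have h4 := mul_le_mul' (le_max_right x.2.1 y.1) (le_refl y.1⁻¹)
    rwa [mul_inv_cancel] at h4

/-- The multiplication of the semigroup `T_G⁺`. -/
def TmulP (x y : PosT G) : PosT G := ⟨Tmul x.1 y.1, tmul_mem x.2 y.2⟩

/-- A linearly ordered group is archimedean if for all `1 < a` and `1 < b` there are
positive integers `m`, `n` with `b ≤ a ^ m` and `a ≤ b ^ n`. -/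
def IsArchGroup (G : Type*) [Group G] [LinearOrder G] : Prop :=
  ∀ a b : G, 1 < a → 1 < b →
    (∃ m : ℕ, 0 < m ∧ b ≤ a ^ m) ∧ ∃ n : ℕ, 0 < n ∧ a ≤ b ^ n

/-- The least group congruence `𝔠_mg` on `T_G`: `x 𝔠_mg y` iff `x·z = y·z` for some
idempotent `z`. -/
def cmgT (x y : G × G × Bool) : Prop :=
  ∃ z : G × G × Bool, Tmul z z = z ∧ Tmul x z = Tmul y z

/-- The least group congruence `𝔠_mg` on `T_G⁺`. -/
def cmgTP (x y : PosT G) : Prop := ∃ z : PosT G, TmulP z z = z ∧ TmulP x z = TmulP y z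

/-!
The element `(a, b, s)` of `T_G` is sent to `b⁻¹ * a`; the factors `h ∨ k` cancel in a product,
so this reverses multiplication, and in particular every idempotent is sent to `1`. Hence
`𝔠_mg`-related elements have the same image. Conversely, for `M` above both second coordinates,
`(M, M, 0)` is idempotent and right multiplication by it normalises `(a, b, s)` to
`(M * b⁻¹ * a, M, 0)`, which depends only on `b⁻¹ * a`. Composing with inversion turns the
antihomomorphism into a homomorphism. In `T_G⁺` the same argument works with `M ≥ 1`.
-/

section Group

variable {G : Type*} [Group G]

theorem exists_surjective_hom_of_antihom {S : Type*} (mul : S → S → S) (φ : S → G)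
    (hφ : Function.Surjective φ) (hanti : ∀ x y, φ (mul x y) = φ y * φ x)
    (r : S → S → Prop) (hr : ∀ x y, φ x = φ y ↔ r x y) :
    ∃ f : S → G, Function.Surjective f ∧ (∀ x y, f (mul x y) = f x * f y) ∧
      ∀ x y, f x = f y ↔ r x y :=
  ⟨fun x => (φ x)⁻¹, inv_surjective.comp hφ, fun x y => by simp [hanti],
    fun x y => by simp [hr]⟩

def tRatio (x : G × G × Bool) : G := x.2.1⁻¹ * x.1

theorem tRatio_surjective : Function.Surjective (tRatio (G := G)) :=
  fun g => ⟨(g, 1, false), by simp [tRatio]⟩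

end Group

section LinearOrder

variable {G : Type*} [Group G] [LinearOrder G]

theorem tRatio_tmul (x y : G × G × Bool) : tRatio (Tmul x y) = tRatio y * tRatio x := by
  simp only [tRatio, Tmul]
  group

theorem tRatio_eq_one_of_idem {z : G × G × Bool} (hz : Tmul z z = z) : tRatio z = 1 := by
  have h := tRatio_tmul z z
  rwa [hz, left_eq_mul] at h

theorem tmul_diag_of_le (x : G × G × Bool) {M : G} (hM : x.2.1 ≤ M) :
    Tmul x (M, M, false) = (M * tRatio x, M, false) := by
  simp only [Tmul, tRatio, max_eq_right hM, mul_assoc]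
  rcases hM.lt_or_eq with h | h <;> simp [h]

theorem tmul_diag_idem (M : G) : Tmul (M, M, false) (M, M, false) = (M, M, false) := by
  simp [tmul_diag_of_le _ le_rfl, tRatio]

theorem tmul_diag_eq_of_tRatio_eq {x y : G × G × Bool} (h : tRatio x = tRatio y) {M : G}
    (hx : x.2.1 ≤ M) (hy : y.2.1 ≤ M) : Tmul x (M, M, false) = Tmul y (M, M, false) := by
  rw [tmul_diag_of_le x hx, tmul_diag_of_le y hy, h]

theorem tRatio_eq_of_cmgT {x y : G × G × Bool} (h : cmgT x y) : tRatio x = tRatio y := by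
  obtain ⟨z, hz, hxz⟩ := h
  have := tRatio_tmul x z
  rwa [hxz, tRatio_tmul, tRatio_eq_one_of_idem hz, one_mul, one_mul, eq_comm] at this

theorem cmgT_iff_tRatio_eq (x y : G × G × Bool) : cmgT x y ↔ tRatio x = tRatio y :=
  ⟨tRatio_eq_of_cmgT, fun h => ⟨_, tmul_diag_idem _,
    tmul_diag_eq_of_tRatio_eq h (le_max_left x.2.1 y.2.1) (le_max_right _ _)⟩⟩

end LinearOrder

theorem cmgTP_iff_tRatio_eq (x y : PosT G) : cmgTP x y ↔ tRatio x.1 = tRatio y.1 := by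
  refine ⟨fun ⟨z, hz, hxz⟩ => tRatio_eq_of_cmgT ⟨z.1, congrArg Subtype.val hz,
    congrArg Subtype.val hxz⟩, fun h => ?_⟩
  set M := max x.1.2.1 y.1.2.1
  have hM : (1 : G) ≤ M := x.2.2.trans (le_max_left _ _)
  exact ⟨⟨(M, M, false), hM, hM⟩, Subtype.ext (tmul_diag_idem M),
    Subtype.ext (tmul_diag_eq_of_tRatio_eq h (le_max_left _ _) (le_max_right _ _))⟩

theorem tRatio_val_surjective {G : Type*} [Group G] [LinearOrder G]
    [CovariantClass G G (· * ·) (· ≤ ·)] : Function.Surjective (fun x : PosT G => tRatio x.1) := by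
  intro g
  rcases le_total 1 g with h | h
  · exact ⟨⟨(g, 1, false), h, le_rfl⟩, by simp [tRatio]⟩
  · exact ⟨⟨(1, g⁻¹, false), le_rfl, one_le_inv'.mpr h⟩, by simp [tRatio]⟩

theorem stmt19_general {G : Type*} [Group G] [LinearOrder G]
    [CovariantClass G G (· * ·) (· ≤ ·)]
    [CovariantClass G G (Function.swap (· * ·)) (· ≤ ·)] :
    ((∀ (a b c d : G) (s t : Bool), cmgT (a, b, s) (c, d, t) ↔ b⁻¹ * a = d⁻¹ * c) ∧
      (Function.Surjective (fun x : G × G × Bool => x.2.1⁻¹ * x.1) ∧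
        ∀ x y : G × G × Bool,
          (Tmul x y).2.1⁻¹ * (Tmul x y).1 = (y.2.1⁻¹ * y.1) * (x.2.1⁻¹ * x.1)) ∧
      (∀ x y : G × G × Bool, x.2.1⁻¹ * x.1 = y.2.1⁻¹ * y.1 ↔ cmgT x y) ∧
      (IsArchGroup G →
        ∃ f : G × G × Bool → G, Function.Surjective f ∧
          (∀ x y, f (Tmul x y) = f x * f y) ∧ ∀ x y, f x = f y ↔ cmgT x y)) ∧
    ((∀ x y : PosT G, cmgTP x y ↔ x.1.2.1⁻¹ * x.1.1 = y.1.2.1⁻¹ * y.1.1) ∧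
      (Function.Surjective (fun x : PosT G => x.1.2.1⁻¹ * x.1.1) ∧
        ∀ x y : PosT G,
          (TmulP x y).1.2.1⁻¹ * (TmulP x y).1.1 =
            (y.1.2.1⁻¹ * y.1.1) * (x.1.2.1⁻¹ * x.1.1)) ∧
      (∀ x y : PosT G, x.1.2.1⁻¹ * x.1.1 = y.1.2.1⁻¹ * y.1.1 ↔ cmgTP x y) ∧
      (IsArchGroup G →
        ∃ f : PosT G → G, Function.Surjective f ∧
          (∀ x y, f (TmulP x y) = f x * f y) ∧ ∀ x y, f x = f y ↔ cmgTP x y)) := by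
  have hT : ∀ x y : G × G × Bool, tRatio x = tRatio y ↔ cmgT x y :=
    fun x y => (cmgT_iff_tRatio_eq x y).symm
  have hP : ∀ x y : PosT G, tRatio x.1 = tRatio y.1 ↔ cmgTP x y :=
    fun x y => (cmgTP_iff_tRatio_eq x y).symm
  have hPanti : ∀ x y : PosT G, tRatio (TmulP x y).1 = tRatio y.1 * tRatio x.1 :=
    fun x y => tRatio_tmul x.1 y.1
  exact ⟨⟨fun _ _ _ _ _ _ => cmgT_iff_tRatio_eq _ _, ⟨tRatio_surjective, tRatio_tmul⟩, hT,
      fun _ => exists_surjective_hom_of_antihom Tmul tRatio tRatio_surjective tRatio_tmul _ hT⟩,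
    ⟨cmgTP_iff_tRatio_eq, ⟨tRatio_val_surjective, hPanti⟩, hP,
      fun _ => exists_surjective_hom_of_antihom TmulP _ tRatio_val_surjective hPanti _ hP⟩⟩

/-- For a linearly ordered `d`-group `G`: `(a,b,s) 𝔠_mg (c,d,t)` iff `b⁻¹·a = d⁻¹·c`;
the map `(a,b,s) ↦ b⁻¹·a` is a surjective antihomomorphism of `T_G` onto `G` whose
fibres are exactly the `𝔠_mg`-classes, so `T_G/𝔠_mg` is antiisomorphic to `G`; and if
`G` is moreover archimedean then `T_G/𝔠_mg` is isomorphic to `G`. The same statements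
hold for `T_G⁺`. -/
theorem stmt19 {G : Type*} [Group G] [LinearOrder G]
    [CovariantClass G G (· * ·) (· ≤ ·)]
    [CovariantClass G G (Function.swap (· * ·)) (· ≤ ·)]
    (hd : ∀ g : G, 1 < g → ∃ x : G, 1 < x ∧ x < g) :
    ((∀ (a b c d : G) (s t : Bool), cmgT (a, b, s) (c, d, t) ↔ b⁻¹ * a = d⁻¹ * c) ∧
      (Function.Surjective (fun x : G × G × Bool => x.2.1⁻¹ * x.1) ∧
        ∀ x y : G × G × Bool,
          (Tmul x y).2.1⁻¹ * (Tmul x y).1 = (y.2.1⁻¹ * y.1) * (x.2.1⁻¹ * x.1)) ∧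
      (∀ x y : G × G × Bool, x.2.1⁻¹ * x.1 = y.2.1⁻¹ * y.1 ↔ cmgT x y) ∧
      (IsArchGroup G →
        ∃ f : G × G × Bool → G, Function.Surjective f ∧
          (∀ x y, f (Tmul x y) = f x * f y) ∧ ∀ x y, f x = f y ↔ cmgT x y)) ∧
    ((∀ x y : PosT G, cmgTP x y ↔ x.1.2.1⁻¹ * x.1.1 = y.1.2.1⁻¹ * y.1.1) ∧
      (Function.Surjective (fun x : PosT G => x.1.2.1⁻¹ * x.1.1) ∧
        ∀ x y : PosT G,
          (TmulP x y).1.2.1⁻¹ * (TmulP x y).1.1 =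
            (y.1.2.1⁻¹ * y.1.1) * (x.1.2.1⁻¹ * x.1.1)) ∧
      (∀ x y : PosT G, x.1.2.1⁻¹ * x.1.1 = y.1.2.1⁻¹ * y.1.1 ↔ cmgTP x y) ∧
      (IsArchGroup G →
        ∃ f : PosT G → G, Function.Surjective f ∧
          (∀ x y, f (TmulP x y) = f x * f y) ∧ ∀ x y, f x = f y ↔ cmgTP x y)) :=
  stmt19_general
end
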